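/- arXiv:2202.01806 — 6 statements merged into one kernel-verified Lean document; each statement's English description precedes it below -/
import Mathlib

section
/- Let X_L̄ and X_S be random variables on finite alphabets with strictly positive conditional probabilities P(X_L̄ = x | X_S = s) > 0 for all x, s. Define the mechanism M₁ releasing Y ∈ {0,1} by: given X_L̄ = x and X_S = s, release Y = 1 with probability min_w P(X_L̄ = x | X_S = w) / P(X_L̄ = x | X_S = s) if x = v, and with probability 0 otherwise. Then for all s with P(X_S = s) > 0, P(Y = 1 | X_S = s) = min_w P(X_L̄ = v | X_S = w); in particular Y is independent of X_S. -/
theorem sum_ite_div_mul_eq_of_ne_zero {X : Type*} [Fintype X] [DecidableEq X]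
    (q c : X → ℝ) (v : X) (hv : q v ≠ 0) :
    ∑ x, (if x = v then c x / q x else 0) * q x = c v := by
  simp only [ite_mul, zero_mul, Finset.sum_ite_eq', Finset.mem_univ, if_true,
    div_mul_cancel₀ _ hv]

theorem stmt1_general {X W : Type} [Fintype X] [Fintype W] [DecidableEq X]
    (q : X → W → ℝ) (π : W → ℝ)
    (hq : ∀ x w, 0 < q x w)
    (hπ1 : ∑ w, π w = 1)
    (v : X) (m : X → ℝ)
    (μ : X → W → ℝ)
    (hμ : ∀ x w, μ x w = if x = v then m x / q x w else 0) :
    ∀ s, 0 < π s →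
      (∑ x, μ x s * q x s) = m v ∧
      (∑ x, μ x s * q x s) = ∑ s', π s' * ∑ x, μ x s' * q x s' := by
  have hY : ∀ s, ∑ x, μ x s * q x s = m v := fun s => by
    simp only [hμ]
    exact sum_ite_div_mul_eq_of_ne_zero (q · s) m v (hq v s).ne'
  intro s _
  refine ⟨hY s, ?_⟩
  simp only [hY, ← Finset.sum_mul, hπ1, one_mul]

/-- Mechanism M₁ releases Y=1 w.p. (min_w P(X_L̄=x|X_S=w))/P(X_L̄=x|X_S=s)
if x = v and 0 otherwise.  Then P(Y=1 | X_S=s) = min_w P(X_L̄=v|X_S=w) for every s with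
P(X_S=s)>0; in particular Y is independent of X_S. -/
theorem stmt1 {X W : Type} [Fintype X] [Fintype W] [DecidableEq X]
    (q : X → W → ℝ) (π : W → ℝ)
    (hq : ∀ x w, 0 < q x w)
    (hπ : ∀ w, 0 ≤ π w) (hπ1 : ∑ w, π w = 1)
    (hqsum : ∀ w, ∑ x, q x w = 1)
    (v : X) (m : X → ℝ)
    (hm : ∀ x, IsLeast {r | ∃ w, 0 < π w ∧ r = q x w} (m x))
    (μ : X → W → ℝ)
    (hμ : ∀ x w, μ x w = if x = v then m x / q x w else 0) :
    ∀ s, 0 < π s →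
      (∑ x, μ x s * q x s) = m v ∧
      (∑ x, μ x s * q x s) = ∑ s', π s' * ∑ x, μ x s' * q x s' :=
  stmt1_general q π hq hπ1 v m μ hμ
end

section
/- Let X_L̄ and X_S be as above and define the mechanism M₂ releasing Y = 1 with probability 1 if X_L̄ = v, and with probability 1 − min_w P(X_L̄ = x | X_S = w) / P(X_L̄ = x | X_S = s) if X_L̄ = x ≠ v and X_S = s. Then P(Y = 0 | X_S = s) = Σ_{x ≠ v} min_w P(X_L̄ = x | X_S = w), which does not depend on s; hence Y is independent of X_S. -/
/-!
Given `X_S = s`, outcome `x ≠ v` has probability `q x s` and is then suppressed (`Y = 0`) with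
probability `m x / q x s`, so it contributes exactly `m x` to `P(Y = 0 | X_S = s)`; the outcome `v`
contributes nothing. The sum `∑_{x ≠ v} m x` does not involve `s`, so averaging it against the
prior `π` returns it unchanged.
-/

open Finset

lemma one_sub_mechanism_mul_eq {X W : Type} [DecidableEq X] {q : X → W → ℝ} {x : X} {s : W}
    (hq : q x s ≠ 0) {v : X} {m : X → ℝ} {μ : X → W → ℝ}
    (hμ : μ x s = if x = v then 1 else 1 - m x / q x s) :
    (1 - μ x s) * q x s = if x = v then 0 else m x := by
  rw [hμ]
  split_ifs
  · ring
  · rw [sub_sub_cancel, div_mul_cancel₀ _ hq]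

lemma sum_one_sub_mechanism_mul_eq {X W : Type} [Fintype X] [DecidableEq X] {q : X → W → ℝ}
    {s : W} (hq : ∀ x, q x s ≠ 0) {v : X} {m : X → ℝ} {μ : X → W → ℝ}
    (hμ : ∀ x, μ x s = if x = v then 1 else 1 - m x / q x s) :
    ∑ x, (1 - μ x s) * q x s = ∑ x ∈ univ.filter (fun x => x ≠ v), m x := by
  rw [sum_filter]
  refine sum_congr rfl fun x _ => ?_
  rw [one_sub_mechanism_mul_eq (hq x) (hμ x), ite_not]

theorem stmt2_general {X W : Type} [Fintype X] [Fintype W] [DecidableEq X]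
    (q : X → W → ℝ) (π : W → ℝ)
    (hq : ∀ x w, 0 < q x w)
    (hπ1 : ∑ w, π w = 1)
    (v : X) (m : X → ℝ)
    (μ : X → W → ℝ)
    (hμ : ∀ x w, μ x w = if x = v then 1 else 1 - m x / q x w) :
    ∀ s, 0 < π s →
      (∑ x, (1 - μ x s) * q x s) = ∑ x ∈ Finset.univ.filter (fun x => x ≠ v), m x ∧
      (∑ x, (1 - μ x s) * q x s) = ∑ s', π s' * ∑ x, (1 - μ x s') * q x s' := by
  intro s _
  have h_mass : ∀ s', ∑ x, (1 - μ x s') * q x s' = ∑ x ∈ univ.filter (fun x => x ≠ v), m x :=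
    fun s' => sum_one_sub_mechanism_mul_eq (fun x => (hq x s').ne') (fun x => hμ x s')
  refine ⟨h_mass s, ?_⟩
  simp only [h_mass]
  rw [← sum_mul, hπ1, one_mul]

/-- Mechanism M₂ releases Y=1 w.p. 1 if X_L̄ = v, and w.p.
1 − (min_w P(X_L̄=x|X_S=w))/P(X_L̄=x|X_S=s) otherwise.  Then
P(Y=0 | X_S=s) = Σ_{x ≠ v} min_w P(X_L̄=x|X_S=w), independent of s;
hence Y is independent of X_S. -/
theorem stmt2 {X W : Type} [Fintype X] [Fintype W] [DecidableEq X]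
    (q : X → W → ℝ) (π : W → ℝ)
    (hq : ∀ x w, 0 < q x w)
    (hπ : ∀ w, 0 ≤ π w) (hπ1 : ∑ w, π w = 1)
    (hqsum : ∀ w, ∑ x, q x w = 1)
    (v : X) (m : X → ℝ)
    (hm : ∀ x, IsLeast {r | ∃ w, 0 < π w ∧ r = q x w} (m x))
    (μ : X → W → ℝ)
    (hμ : ∀ x w, μ x w = if x = v then 1 else 1 - m x / q x w) :
    ∀ s, 0 < π s →
      (∑ x, (1 - μ x s) * q x s) = ∑ x ∈ Finset.univ.filter (fun x => x ≠ v), m x ∧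
      (∑ x, (1 - μ x s) * q x s) = ∑ s', π s' * ∑ x, (1 - μ x s') * q x s' :=
  stmt2_general q π hq hπ1 v m μ hμ
end

section
/- Under mechanism M₁ with the intersection set empty (so that the true answer is A = 1{X_L = v}), the per-user error probability P(Y ≠ A) equals P(X_L = v) − min_w P(X_L = v | X_S = w). -/
open Finset

/- The mechanism can only err when `X_L = v`, and there it stays silent with probability
`1 - m v / q v s`; so given `X_S = s` the error probability is `q v s - m v`, and averaging
over `s` gives the claim. -/

theorem sum_mul_ite_sub_eq_of_eq_zero {X : Type} [Fintype X] [DecidableEq X]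
    (q μ : X → ℝ) (v : X) (hμ : ∀ x, x ≠ v → μ x = 0) :
    ∑ x, q x * (if x = v then 1 - μ x else μ x) = q v - q v * μ v := by
  rw [sum_eq_single v (fun x _ hx => by rw [if_neg hx, hμ x hx, mul_zero])
    (fun hv => absurd (mem_univ v) hv), if_pos rfl, mul_one_sub]

theorem sum_mul_sub_const_of_sum_eq_one {W : Type} [Fintype W] (π f : W → ℝ) (c : ℝ)
    (hπ1 : ∑ w, π w = 1) : ∑ w, π w * (f w - c) = ∑ w, π w * f w - c := by
  simp only [mul_sub, sum_sub_distrib, ← sum_mul, hπ1, one_mul]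

theorem stmt3_general {X W : Type} [Fintype X] [Fintype W] [DecidableEq X]
    (q : X → W → ℝ) (π : W → ℝ)
    (hq : ∀ x w, 0 < q x w)
    (hπ1 : ∑ w, π w = 1)
    (v : X) (m : X → ℝ)
    (μ : X → W → ℝ)
    (hμ : ∀ x w, μ x w = if x = v then m x / q x w else 0) :
    (∑ s, π s * ∑ x, q x s * (if x = v then 1 - μ x s else μ x s))
      = (∑ s, π s * q v s) - m v := by
  have hcond : ∀ s, ∑ x, q x s * (if x = v then 1 - μ x s else μ x s) = q v s - m v := by
    intro s
    rw [sum_mul_ite_sub_eq_of_eq_zero (q · s) (μ · s) v (fun x hx => by rw [hμ, if_neg hx]),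
      hμ, if_pos rfl, mul_div_cancel₀ _ (hq v s).ne']
  simp only [hcond]
  exact sum_mul_sub_const_of_sum_eq_one π (q v) (m v) hπ1

/-- For mechanism M₁ with L ∩ S = ∅ and true answer A = 1{X_L = v},
the per-user error probability P(Y ≠ A) equals P(X_L = v) − min_w P(X_L = v | X_S = w). -/
theorem stmt3 {X W : Type} [Fintype X] [Fintype W] [DecidableEq X]
    (q : X → W → ℝ) (π : W → ℝ)
    (hq : ∀ x w, 0 < q x w)
    (hπ : ∀ w, 0 ≤ π w) (hπ1 : ∑ w, π w = 1)
    (hqsum : ∀ w, ∑ x, q x w = 1)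
    (v : X) (m : X → ℝ)
    (hm : ∀ x, IsLeast {r | ∃ w, 0 < π w ∧ r = q x w} (m x))
    (μ : X → W → ℝ)
    (hμ : ∀ x w, μ x w = if x = v then m x / q x w else 0) :
    (∑ s, π s * ∑ x, q x s * (if x = v then 1 - μ x s else μ x s))
      = (∑ s, π s * q v s) - m v :=
  stmt3_general q π hq hπ1 v m μ hμ
end

section
/- Under mechanism M₂ with empty intersection set, the per-user error probability P(Y ≠ A) equals 1 − P(X_L = v) − Σ_{x ≠ v} min_w P(X_L = x | X_S = w), where A = 1{X_L = v}. -/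
/-!
Conditionally on `X_S = s`, the outcome `X_L = v` is always released correctly, while an outcome
`x ≠ v` is released wrongly with probability `1 - m x / q x s`, which weighted by `q x s` becomes
`q x s - m x`. Summing over `x ≠ v` gives `1 - q v s - ∑_{x ≠ v} m x` for every `s`, and averaging over `s` gives the claim.
-/

open Finset

section ErrorProbability

variable {K X : Type*} [Field K] [Fintype X] [DecidableEq X]

lemma mul_one_sub_div_self {a b : K} (ha : a ≠ 0) : a * (1 - b / a) = a - b := by
  rw [mul_sub, mul_one, mul_div_cancel₀ _ ha]

lemma sum_mul_release_error_eq (q m μ : X → K) (v : X)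
    (hq : ∀ x, x ≠ v → q x ≠ 0) (hqsum : ∑ x, q x = 1)
    (hμ : ∀ x, μ x = if x = v then 1 else 1 - m x / q x) :
    ∑ x, q x * (if x = v then 1 - μ x else μ x)
      = 1 - q v - ∑ x ∈ univ.filter (fun x => x ≠ v), m x := by
  have hoff : ∀ x ∈ univ.erase v, q x * (if x = v then 1 - μ x else μ x) = q x - m x := by
    intro x hx
    have hxv := ne_of_mem_erase hx
    rw [if_neg hxv, hμ, if_neg hxv, mul_one_sub_div_self (hq x hxv)]
  rw [← add_sum_erase _ _ (mem_univ v), sum_congr rfl hoff, sum_sub_distrib,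
    sum_erase_eq_sub (mem_univ v), hqsum, filter_ne', if_pos rfl, hμ, if_pos rfl]
  ring

lemma sum_mul_one_sub_sub {W : Type*} [Fintype W] (π p : W → K) (c : K)
    (hπ1 : ∑ w, π w = 1) :
    ∑ w, π w * (1 - p w - c) = 1 - ∑ w, π w * p w - c := by
  simp only [mul_sub, mul_one, sum_sub_distrib, ← sum_mul, hπ1, one_mul]

end ErrorProbability

theorem stmt4_general {X W : Type} [Fintype X] [Fintype W] [DecidableEq X]
    (q : X → W → ℝ) (π : W → ℝ)
    (hq : ∀ x w, 0 < q x w)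
    (hπ1 : ∑ w, π w = 1)
    (hqsum : ∀ w, ∑ x, q x w = 1)
    (v : X) (m : X → ℝ)
    (μ : X → W → ℝ)
    (hμ : ∀ x w, μ x w = if x = v then 1 else 1 - m x / q x w) :
    (∑ s, π s * ∑ x, q x s * (if x = v then 1 - μ x s else μ x s))
      = 1 - (∑ s, π s * q v s) - ∑ x ∈ Finset.univ.filter (fun x => x ≠ v), m x := by
  have hstate : ∀ s, ∑ x, q x s * (if x = v then 1 - μ x s else μ x s)
      = 1 - q v s - ∑ x ∈ univ.filter (fun x => x ≠ v), m x := fun s =>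
    sum_mul_release_error_eq (q · s) m (μ · s) v (fun x _ => (hq x s).ne') (hqsum s)
      (fun x => hμ x s)
  simp only [hstate]
  exact sum_mul_one_sub_sub π (q v) _ hπ1

/-- For mechanism M₂ with empty intersection set, the per-user error
probability P(Y ≠ A) equals 1 − P(X_L = v) − Σ_{x ≠ v} min_w P(X_L = x | X_S = w). -/
theorem stmt4 {X W : Type} [Fintype X] [Fintype W] [DecidableEq X]
    (q : X → W → ℝ) (π : W → ℝ)
    (hq : ∀ x w, 0 < q x w)
    (hπ : ∀ w, 0 ≤ π w) (hπ1 : ∑ w, π w = 1)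
    (hqsum : ∀ w, ∑ x, q x w = 1)
    (v : X) (m : X → ℝ)
    (hm : ∀ x, IsLeast {r | ∃ w, 0 < π w ∧ r = q x w} (m x))
    (μ : X → W → ℝ)
    (hμ : ∀ x w, μ x w = if x = v then 1 else 1 - m x / q x w) :
    (∑ s, π s * ∑ x, q x s * (if x = v then 1 - μ x s else μ x s))
      = 1 - (∑ s, π s * q v s) - ∑ x ∈ Finset.univ.filter (fun x => x ≠ v), m x :=
  stmt4_general q π hq hπ1 hqsum v m μ hμ
end

section
/- Let A ∈ {0,1} be a binary random variable and Y any random variable with Y independent of a random variable X_S, and suppose A is a function of a random vector X with X_S a subvector. Then the error probability P_e of any estimator Y of A satisfies h(P_e) ≥ H(A) − H(A | X_S), where h is the binary entropy function, provided the mechanism Y satisfies the perfect-privacy constraint that Y is independent of X_S and A—Y forms a channel through X (S → X → Y Markov chain). -/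
/-!
Fano's inequality for binary `A` and `Y`: conditioning on `Y` and using concavity of the binary
entropy `h` gives `H(A | Y) ≤ h(P(Y ≠ A))`. It then suffices that `H(A) ≤ H(A | S) + H(A | Y)`
whenever `Y` is independent of `S`. With `r` the joint law of `(A, S, Y)`, the defect
`H(A | S) + H(A | Y) - H(A)` is `∑ r log (r_S r_Y r_A / (r_SA r_YA))`. Independence gives
`r ≤ r_SY = r_S r_Y`, so `log x ≥ 1 - 1/x` bounds the defect below by
`∑ r - ∑ r_SA r_YA / r_A = 1 - 1 = 0`.
-/

open Finset

/-- Binary entropy function. -/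
noncomputable def binEnt (p : ℝ) : ℝ := -(p * Real.log p) - (1 - p) * Real.log (1 - p)

open Real

lemma binEnt_eq_binEntropy : binEnt = binEntropy := by
  funext p
  rw [binEntropy_eq_negMulLog_add_negMulLog_one_sub, binEnt, negMulLog, negMulLog]
  ring

lemma mul_binEntropy_div_add {b c : ℝ} (hb : 0 ≤ b) (hc : 0 ≤ c) :
    (b + c) * binEntropy (b / (b + c)) = negMulLog b + negMulLog c - negMulLog (b + c) := by
  obtain hbc | hbc := (add_nonneg hb hc).eq_or_lt
  · obtain ⟨rfl, rfl⟩ : b = 0 ∧ c = 0 := ⟨by linarith, by linarith⟩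
    simp
  · have hc' : c = c / (b + c) * (b + c) := (div_mul_cancel₀ c hbc.ne').symm
    have hb' : b = b / (b + c) * (b + c) := (div_mul_cancel₀ b hbc.ne').symm
    have hsum : 1 - b / (b + c) = c / (b + c) := by field_simp; ring
    conv_rhs => rw [hb', hc', negMulLog_mul, negMulLog_mul]
    rw [binEntropy_eq_negMulLog_add_negMulLog_one_sub, hsum]
    field_simp
    ring

lemma sub_le_mul_log_sub_log {Q u m : ℝ} (hQ : 0 < Q) (hQu : Q ≤ u) (hm : 0 < m) :
    Q - m ≤ Q * (log u - log m) :=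
  calc Q - m = Q * (1 - (Q / m)⁻¹) := by field_simp
    _ ≤ Q * log (Q / m) := by gcongr; exact one_sub_inv_le_log_of_pos (div_pos hQ hm)
    _ = Q * (log Q - log m) := by rw [log_div hQ.ne' hm.ne']
    _ ≤ Q * (log u - log m) := by gcongr

noncomputable section Law

variable {Ω ι κ α : Type*} [Fintype Ω] [DecidableEq ι] [DecidableEq κ] [DecidableEq α]

def law (q : Ω → ℝ) (X : Ω → ι) (i : ι) : ℝ := ∑ ω with X ω = i, q ω

def entropy [Fintype ι] (q : Ω → ℝ) (X : Ω → ι) : ℝ := ∑ i, negMulLog (law q X i)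

def condEntropy [Fintype ι] [Fintype κ] (q : Ω → ℝ) (X : Ω → ι) (Y : Ω → κ) : ℝ :=
  entropy q (fun ω => (Y ω, X ω)) - entropy q Y

variable (q : Ω → ℝ)

lemma sum_law [Fintype ι] (X : Ω → ι) : ∑ i, law q X i = ∑ ω, q ω :=
  sum_fiberwise univ X q

lemma sum_law_mul [Fintype ι] (X : Ω → ι) (F : ι → ℝ) :
    ∑ i, law q X i * F i = ∑ ω, q ω * F (X ω) := by
  rw [← sum_fiberwise univ X]
  refine sum_congr rfl fun i _ => ?_
  rw [law, sum_mul]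
  exact sum_congr rfl fun ω hω => by rw [(mem_filter.1 hω).2]

lemma sum_mul_log_law [Fintype ι] (X : Ω → ι) :
    ∑ ω, q ω * log (law q X (X ω)) = -entropy q X := by
  simp only [← sum_law_mul q X (fun i => log (law q X i)), entropy, negMulLog, ← sum_neg_distrib,
    neg_mul, neg_neg]

lemma sum_law_prod_right [Fintype κ] (X : Ω → ι) (Y : Ω → κ) (i : ι) :
    ∑ j, law q (fun ω => (X ω, Y ω)) (i, j) = law q X i := by
  rw [law, ← sum_fiberwise _ Y]
  simp only [law, filter_filter, Prod.mk.injEq]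

lemma sum_law_prod_left [Fintype ι] (X : Ω → ι) (Y : Ω → κ) (j : κ) :
    ∑ i, law q (fun ω => (X ω, Y ω)) (i, j) = law q Y j := by
  rw [law, ← sum_fiberwise _ X]
  simp only [law, filter_filter, Prod.mk.injEq, and_comm]

lemma sum_law_mul_law_div_law [Fintype ι] [Fintype κ] [Fintype α] (A : Ω → α)
    (S : Ω → ι) (Y : Ω → κ) :
    ∑ t : α × ι × κ, law q (fun ω => (S ω, A ω)) (t.2.1, t.1) *
      law q (fun ω => (Y ω, A ω)) (t.2.2, t.1) / law q A t.1 = ∑ ω, q ω := by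
  rw [← sum_law q A, Fintype.sum_prod_type]
  refine sum_congr rfl fun a _ => ?_
  simp only [Fintype.sum_prod_type, ← sum_div, ← Fintype.sum_mul_sum, sum_law_prod_left,
    mul_self_div_self]

variable {q}

lemma law_nonneg (hq : 0 ≤ q) (X : Ω → ι) (i : ι) : 0 ≤ law q X i :=
  sum_nonneg fun ω _ => hq ω

lemma law_le_law_comp (hq : 0 ≤ q) (X : Ω → ι) (f : ι → κ) (i : ι) :
    law q X i ≤ law q (f ∘ X) (f i) :=
  sum_le_sum_of_subset_of_nonneg (monotone_filter_right _ fun _ _ h => congrArg f h)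
    fun ω _ _ => hq ω

theorem entropy_le_condEntropy_add_condEntropy [Fintype ι] [Fintype κ] [Fintype α]
    (hq : 0 ≤ q) (hsum : ∑ ω, q ω = 1) (A : Ω → α) (S : Ω → ι) (Y : Ω → κ)
    (hSY : ∀ s y, law q (fun ω => (S ω, Y ω)) (s, y) = law q S s * law q Y y) :
    entropy q A ≤ condEntropy q A S + condEntropy q A Y := by
  set T := fun ω => (A ω, S ω, Y ω)
  set lSA := law q (fun ω => (S ω, A ω))
  set lYA := law q (fun ω => (Y ω, A ω))
  let F (t : α × ι × κ) : ℝ := log (law q S t.2.1) + log (law q Y t.2.2) + log (law q A t.1)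
    - log (lSA (t.2.1, t.1)) - log (lYA (t.2.2, t.1))
  have hF : ∑ t, law q T t * F t = condEntropy q A S + condEntropy q A Y - entropy q A := by
    simp only [sum_law_mul, F, T, mul_add, mul_sub, sum_add_distrib, sum_sub_distrib, lSA, lYA,
      sum_mul_log_law, condEntropy]
    ring
  have hpt : ∀ t, law q T t - lSA (t.2.1, t.1) * lYA (t.2.2, t.1) / law q A t.1 ≤
      law q T t * F t := by
    rintro ⟨a, s, y⟩
    have hSY' : law q T (a, s, y) ≤ law q S s * law q Y y :=
      hSY s y ▸ law_le_law_comp hq T (fun t => (t.2.1, t.2.2)) (a, s, y)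
    have hSA : law q T (a, s, y) ≤ lSA (s, a) := law_le_law_comp hq T (fun t => (t.2.1, t.1)) _
    have hYA : law q T (a, s, y) ≤ lYA (y, a) := law_le_law_comp hq T (fun t => (t.2.2, t.1)) _
    have hA : law q T (a, s, y) ≤ law q A a := law_le_law_comp hq T Prod.fst _
    obtain hzero | hpos := (law_nonneg hq T (a, s, y)).eq_or_lt
    · rw [← hzero, zero_mul, zero_sub, neg_nonpos]
      exact div_nonneg (mul_nonneg (law_nonneg hq _ _) (law_nonneg hq _ _)) (law_nonneg hq _ _)
    have hS : 0 < law q S s := hpos.trans_le (law_le_law_comp hq T (fun t => t.2.1) _)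
    have hY : 0 < law q Y y := hpos.trans_le (law_le_law_comp hq T (fun t => t.2.2) _)
    replace hSA := hpos.trans_le hSA
    replace hYA := hpos.trans_le hYA
    replace hA := hpos.trans_le hA
    calc _ ≤ law q T (a, s, y) *
          (log (law q S s * law q Y y) - log (lSA (s, a) * lYA (y, a) / law q A a)) :=
          sub_le_mul_log_sub_log hpos hSY' (by positivity)
      _ = _ := by
          rw [log_mul hS.ne' hY.ne', log_div (by positivity) hA.ne', log_mul hSA.ne' hYA.ne']
          ring
  have := sum_le_sum fun t (_ : t ∈ univ) => hpt t
  rw [sum_sub_distrib, sum_law, sum_law_mul_law_div_law, hsum, hF] at this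
  linarith

lemma entropy_eq_binEntropy (hsum : ∑ ω, q ω = 1) (A : Ω → Bool) :
    entropy q A = binEntropy (law q A true) := by
  have hfalse : law q A false = 1 - law q A true := by
    rw [← hsum, ← sum_law q A, Fintype.sum_bool]
    ring
  rw [entropy, Fintype.sum_bool, hfalse, binEntropy_eq_negMulLog_add_negMulLog_one_sub]

lemma condEntropy_eq_sum_mul_binEntropy [Fintype κ] (hq : 0 ≤ q) (X : Ω → Bool) (Y : Ω → κ)
    (a : κ → Bool) :
    condEntropy q X Y =
      ∑ y, law q Y y * binEntropy (law q (fun ω => (Y ω, X ω)) (y, a y) / law q Y y) := by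
  rw [condEntropy, entropy, entropy, Fintype.sum_prod_type, ← sum_sub_distrib]
  refine sum_congr rfl fun y _ => ?_
  have hsplit (f : Bool → ℝ) : ∑ x, f x = f (a y) + f (!a y) := by
    cases a y <;> simp [add_comm]
  rw [← sum_law_prod_right q Y X y, hsplit, hsplit,
    mul_binEntropy_div_add (law_nonneg hq _ _) (law_nonneg hq _ _)]

theorem condEntropy_le_binEntropy (hq : 0 ≤ q) (hsum : ∑ ω, q ω = 1) (A Y : Ω → Bool) :
    condEntropy q A Y ≤ binEntropy (∑ ω with Y ω ≠ A ω, q ω) := by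
  set lYA := law q (fun ω => (Y ω, A ω))
  have herr : ∑ ω with Y ω ≠ A ω, q ω = ∑ y, lYA (y, !y) := by
    rw [← sum_fiberwise _ Y q]
    refine sum_congr rfl fun y _ => ?_
    rw [filter_filter]
    refine sum_congr (filter_congr fun ω _ => ?_) fun _ _ => rfl
    rw [Prod.mk.injEq]
    cases Y ω <;> cases A ω <;> cases y <;> decide
  have hle (y : Bool) : lYA (y, !y) ≤ law q Y y := law_le_law_comp hq _ Prod.fst _
  have hcancel (y : Bool) : law q Y y * (lYA (y, !y) / law q Y y) = lYA (y, !y) :=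
    mul_div_cancel_of_imp' fun h => le_antisymm (h ▸ hle y) (law_nonneg hq _ _)
  have hmem (y : Bool) : lYA (y, !y) / law q Y y ∈ Set.Icc 0 1 :=
    ⟨div_nonneg (law_nonneg hq _ _) (law_nonneg hq _ _),
      div_le_one_of_le₀ (hle y) (law_nonneg hq _ _)⟩
  rw [condEntropy_eq_sum_mul_binEntropy hq A Y (!·), herr]
  calc ∑ y, law q Y y * binEntropy (lYA (y, !y) / law q Y y)
      ≤ binEntropy (∑ y, law q Y y * (lYA (y, !y) / law q Y y)) :=
        strictConcave_binEntropy.concaveOn.le_map_sum (fun y _ => law_nonneg hq _ _)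
          (by rw [sum_law, hsum]) fun y _ => hmem y
    _ = binEntropy (∑ y, lYA (y, !y)) := by simp only [hcancel]

end Law

section Uncurry

variable {Ξ β ι : Type*} [Fintype Ξ] [Fintype β] [DecidableEq ι] (p : Ξ → β → ℝ)

open Function

lemma law_uncurry_comp_fst (X : Ξ → ι) (i : ι) :
    law (uncurry p) (fun ω => X ω.1) i = ∑ x with X x = i, ∑ y, p x y := by
  simp only [law, sum_filter, Fintype.sum_prod_type, uncurry_apply_pair]
  exact sum_congr rfl fun x _ => by split_ifs <;> simp

lemma law_uncurry_prod_mk_snd [DecidableEq β] (X : Ξ → ι) (i : ι) (b : β) :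
    law (uncurry p) (fun ω => (X ω.1, ω.2)) (i, b) = ∑ x with X x = i, p x b := by
  simp only [law, sum_filter, Fintype.sum_prod_type, uncurry_apply_pair, Prod.mk.injEq, ite_and]
  exact sum_congr rfl fun x _ => by split_ifs <;> simp

lemma law_uncurry_snd [DecidableEq β] (b : β) : law (uncurry p) Prod.snd b = ∑ x, p x b := by
  simp [law, sum_filter, Fintype.sum_prod_type]

end Uncurry

/-- Fano-type lower bound: for binary A = α(X), released (binary) answer Y
with joint pmf p over (X, Y), if Y is independent of the sensitive subvector X_S = σ(X)
(perfect privacy; the Markov chain X_S → X → Y holds since X_S is a function of X), then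
h(P_e) ≥ H(A) − H(A | X_S), where P_e = P(Y ≠ A) and h is binary entropy. -/
theorem stmt7 {Ξ S : Type} [Fintype Ξ] [Fintype S] [DecidableEq S]
    (p : Ξ → Bool → ℝ) (σ : Ξ → S) (α : Ξ → Bool)
    (hp : ∀ x y, 0 ≤ p x y) (hsum : ∑ x, ∑ y, p x y = 1)
    (hpriv : ∀ (y : Bool) (s : S),
      (∑ x ∈ univ.filter (fun x => σ x = s), p x y)
        = (∑ x, p x y) * (∑ x ∈ univ.filter (fun x => σ x = s), ∑ y', p x y')) :
    binEnt (∑ x, ∑ y, if y ≠ α x then p x y else 0)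
      ≥ binEnt (∑ x ∈ univ.filter (fun x => α x = true), ∑ y, p x y)
        - ∑ s, (∑ x ∈ univ.filter (fun x => σ x = s), ∑ y, p x y) *
            binEnt ((∑ x ∈ univ.filter (fun x => σ x = s ∧ α x = true), ∑ y, p x y)
              / (∑ x ∈ univ.filter (fun x => σ x = s), ∑ y, p x y)) := by
  set q := Function.uncurry p
  have hq : 0 ≤ q := fun ω => hp ω.1 ω.2
  have hq1 : ∑ ω, q ω = 1 := by rw [Fintype.sum_prod_type]; exact hsum
  have hSY (s : S) (y : Bool) :
      law q (fun ω => (σ ω.1, ω.2)) (s, y) = law q (fun ω => σ ω.1) s * law q Prod.snd y := by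
    rw [law_uncurry_prod_mk_snd, law_uncurry_comp_fst, law_uncurry_snd]
    exact (hpriv y s).trans (mul_comm _ _)
  have hPe : ∑ x, ∑ y, (if y ≠ α x then p x y else 0) = ∑ ω with ω.2 ≠ α ω.1, q ω := by
    rw [sum_filter, Fintype.sum_prod_type]
    rfl
  have hSA (s : S) :
      ∑ x with σ x = s ∧ α x = true, ∑ y, p x y = law q (fun ω => (σ ω.1, α ω.1)) (s, true) := by
    rw [law_uncurry_comp_fst (X := fun x => (σ x, α x))]
    simp only [Prod.mk.injEq]
  simp only [binEnt_eq_binEntropy, hPe, ← law_uncurry_comp_fst, hSA]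
  rw [← entropy_eq_binEntropy hq1, ← condEntropy_eq_sum_mul_binEntropy hq _ _ fun _ => true]
  have hfano := condEntropy_le_binEntropy hq hq1 (fun ω => α ω.1) Prod.snd
  have hkey := entropy_le_condEntropy_add_condEntropy hq hq1 (fun ω => α ω.1) (fun ω => σ ω.1)
    Prod.snd hSY
  linarith
end

section
/- Under perfect privacy (Y independent of X_S) and the Markov chain X_S → X → Y, the mutual information satisfies I(A; Y) ≤ H(A | X_S), where A is a deterministic function of X. -/
/-!
Write `H` for Shannon entropy and `S = X_S`. Expanding `binEnt` into entropies, the claim reads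
`H(A) + H(S) + H(Y) ≤ H(S, A) + H(A, Y)`. Submodularity of entropy (`I(S; Y | A) ≥ 0`, which
is Gibbs' inequality, i.e. `log x ≤ x - 1`) gives `H(S, A) + H(A, Y) ≥ H(A) + H(S, A, Y)`;
forgetting `A` lowers entropy, `H(S, A, Y) ≥ H(S, Y)`; and perfect privacy makes the law of
`(S, Y)` a product, so `H(S, Y) = H(S) + H(Y)`.
-/

open Finset

open Real

lemma Finset.sum_fiberwise_filter_and {ι κ M : Type*} [Fintype κ] [DecidableEq κ]
    [AddCommMonoid M] (s : Finset ι) (P : ι → Prop) [DecidablePred P] (g : ι → κ) (f : ι → M) :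
    ∑ k, ∑ i ∈ s.filter (fun i => P i ∧ g i = k), f i = ∑ i ∈ s.filter P, f i := by
  simp_rw [← filter_filter]
  exact sum_fiberwise _ g f

lemma Finset.sum_fiberwise_filter_and' {ι κ M : Type*} [Fintype κ] [DecidableEq κ]
    [AddCommMonoid M] (s : Finset ι) (P : ι → Prop) [DecidablePred P] (g : ι → κ) (f : ι → M) :
    ∑ k, ∑ i ∈ s.filter (fun i => g i = k ∧ P i), f i = ∑ i ∈ s.filter P, f i := by
  simp_rw [and_comm]
  exact sum_fiberwise_filter_and s P g f

namespace Real

lemma negMulLog_add_le {a b : ℝ} (ha : 0 ≤ a) (hb : 0 ≤ b) :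
    negMulLog (a + b) ≤ negMulLog a + negMulLog b := by
  have hlog : ∀ {x}, 0 ≤ x → x ≤ a + b → x * log x ≤ x * log (a + b) := fun hx hxab => by
    rcases hx.eq_or_lt with rfl | hx
    · simp
    · exact mul_le_mul_of_nonneg_left (log_le_log hx hxab) hx.le
  simp only [negMulLog_eq_neg, add_mul]
  linarith [hlog ha (le_add_of_nonneg_right hb), hlog hb (le_add_of_nonneg_left ha)]

lemma negMulLog_sum_le {ι : Type*} (s : Finset ι) {f : ι → ℝ} (hf : ∀ i ∈ s, 0 ≤ f i) :
    negMulLog (∑ i ∈ s, f i) ≤ ∑ i ∈ s, negMulLog (f i) :=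
  le_sum_of_subadditive_on_pred negMulLog (0 ≤ ·) negMulLog_zero.le
    (fun _ _ => negMulLog_add_le) (fun _ _ => add_nonneg) f hf

lemma mul_log_div_le_sub {x y : ℝ} (hx : 0 < x) (hy : 0 < y) : x * log (y / x) ≤ y - x :=
  calc x * log (y / x) ≤ x * (y / x - 1) :=
        mul_le_mul_of_nonneg_left (log_le_sub_one_of_pos (div_pos hy hx)) hx.le
    _ = y - x := by field_simp

lemma sum_sum_negMulLog_mul {ι κ : Type*} [Fintype ι] [Fintype κ] (u : ι → ℝ) (v : κ → ℝ)
    (hu : ∑ i, u i = 1) (hv : ∑ j, v j = 1) :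
    ∑ i, ∑ j, negMulLog (u i * v j) = ∑ i, negMulLog (u i) + ∑ j, negMulLog (v j) := by
  simp only [negMulLog_mul, sum_add_distrib, ← sum_mul, ← mul_sum, hu, hv, one_mul]

/-- Gibbs' inequality: the mutual information of the two coordinates of a nonnegative mass
function `h` (not necessarily normalised) is nonnegative. -/
lemma sum_sum_negMulLog_add_negMulLog_sum_le {ι κ : Type*} [Fintype ι] [Fintype κ]
    (h : ι → κ → ℝ) (hh : ∀ i j, 0 ≤ h i j) :
    ∑ i, ∑ j, negMulLog (h i j) + negMulLog (∑ i, ∑ j, h i j)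
      ≤ ∑ i, negMulLog (∑ j, h i j) + ∑ j, negMulLog (∑ i, h i j) := by
  set G : ι → ℝ := fun i => ∑ j, h i j
  set P : κ → ℝ := fun j => ∑ i, h i j
  set m := ∑ i, ∑ j, h i j
  have hG : ∀ i j, h i j ≤ G i := fun i j => single_le_sum (fun j _ => hh i j) (mem_univ j)
  have hP : ∀ i j, h i j ≤ P j := fun i j => single_le_sum (fun i _ => hh i j) (mem_univ i)
  have hm : ∀ i, G i ≤ m := fun i =>
    single_le_sum (fun i _ => sum_nonneg fun j _ => hh i j) (mem_univ i)
  have hterm : ∀ i j, h i j * (log (G i) + log (P j) - log m - log (h i j))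
      ≤ G i * P j / m - h i j := by
    intro i j
    rcases (hh i j).eq_or_lt with hz | hpos
    · rw [← hz, zero_mul, sub_zero]
      exact div_nonneg (mul_nonneg (hz.le.trans (hG i j)) (hz.le.trans (hP i j)))
        (hz.le.trans ((hG i j).trans (hm i)))
    · have hGi := hpos.trans_le (hG i j)
      have hPj := hpos.trans_le (hP i j)
      have hm0 := hGi.trans_le (hm i)
      rw [← log_mul hGi.ne' hPj.ne', ← log_div (by positivity) hm0.ne',
        ← log_div (by positivity) hpos.ne']
      exact mul_log_div_le_sub hpos (by positivity)
  have hmass : ∑ i, ∑ j, (G i * P j / m - h i j) = 0 := by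
    have hPm : ∑ j, P j = m := sum_comm
    simp only [sum_sub_distrib, mul_div_assoc, ← mul_sum, ← sum_mul, ← sum_div, hPm]
    rw [← mul_div_assoc, mul_self_div_self, sub_self]
  have hexpand : ∑ i, ∑ j, h i j * (log (G i) + log (P j) - log m - log (h i j))
      = ∑ i, ∑ j, negMulLog (h i j) + negMulLog m
        - ∑ i, negMulLog (G i) - ∑ j, negMulLog (P j) := by
    have hPlog : ∑ i, ∑ j, h i j * log (P j) = ∑ j, P j * log (P j) := by
      rw [sum_comm]; simp only [← sum_mul, P]
    simp only [mul_add, mul_sub, sum_add_distrib, sum_sub_distrib, hPlog, negMulLog_eq_neg,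
      sum_neg_distrib, ← sum_mul, G, m]
    ring
  linarith [sum_le_sum fun i (_ : i ∈ univ) => sum_le_sum fun j (_ : j ∈ univ) => hterm i j]

end Real

/-- When `a + b = 0` both sides vanish, because `x / 0 = 0` and `log (-a) = log a`. -/
lemma mul_binEnt_div (a b : ℝ) :
    (a + b) * binEnt (a / (a + b)) = negMulLog a + negMulLog b - negMulLog (a + b) := by
  rcases eq_or_ne (a + b) 0 with hab | hab
  · obtain rfl : b = -a := by linarith
    simp [negMulLog]
  · have hsub : 1 - a / (a + b) = b * (a + b)⁻¹ := by field_simp; ring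
    have hbin : binEnt (a / (a + b)) = negMulLog (a * (a + b)⁻¹) + negMulLog (b * (a + b)⁻¹) := by
      rw [binEnt, hsub, div_eq_mul_inv]; simp only [negMulLog_eq_neg]; ring
    rw [hbin, negMulLog_mul, negMulLog_mul]
    simp only [negMulLog_eq_neg, log_inv]
    field_simp
    ring

/-- For the joint law `q` of `(S, A, Y)` with `S` independent of `Y`, this is
`H(A) + H(Y) + H(S) ≤ H(S, A) + H(A, Y)`. -/
lemma sum_negMulLog_marginals_le_of_indep {S A Y : Type*} [Fintype S] [Fintype A] [Fintype Y]
    (q : S → A → Y → ℝ) (hq : ∀ s a y, 0 ≤ q s a y) (htotal : ∑ s, ∑ a, ∑ y, q s a y = 1)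
    (hindep : ∀ s y, ∑ a, q s a y = (∑ s', ∑ a, q s' a y) * ∑ a, ∑ y', q s a y') :
    ∑ a, negMulLog (∑ s, ∑ y, q s a y) + ∑ y, negMulLog (∑ s, ∑ a, q s a y)
        + ∑ s, negMulLog (∑ a, ∑ y, q s a y)
      ≤ ∑ s, ∑ a, negMulLog (∑ y, q s a y) + ∑ a, ∑ y, negMulLog (∑ s, q s a y) := by
  have hsubmod : ∀ a, ∑ s, ∑ y, negMulLog (q s a y) + negMulLog (∑ s, ∑ y, q s a y)
      ≤ ∑ s, negMulLog (∑ y, q s a y) + ∑ y, negMulLog (∑ s, q s a y) := fun a =>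
    sum_sum_negMulLog_add_negMulLog_sum_le (fun s y => q s a y) (fun s y => hq s a y)
  have hmono : ∑ s, ∑ y, negMulLog (∑ a, q s a y) ≤ ∑ s, ∑ y, ∑ a, negMulLog (q s a y) := by
    gcongr with s _ y _
    exact negMulLog_sum_le _ fun a _ => hq s a y
  have hcomm₃ : ∑ s, ∑ y, ∑ a, negMulLog (q s a y) = ∑ a, ∑ s, ∑ y, negMulLog (q s a y) :=
    (sum_congr rfl fun s _ => sum_comm).trans sum_comm
  have hsplit : ∑ s, ∑ y, negMulLog (∑ a, q s a y)
      = ∑ s, negMulLog (∑ a, ∑ y, q s a y) + ∑ y, negMulLog (∑ s, ∑ a, q s a y) := by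
    have hY : ∑ y, ∑ s, ∑ a, q s a y = 1 := by
      rw [← htotal, sum_comm]; exact sum_congr rfl fun s _ => sum_comm
    calc ∑ s, ∑ y, negMulLog (∑ a, q s a y)
        = ∑ s, ∑ y, negMulLog ((∑ a, ∑ y', q s a y') * ∑ s', ∑ a, q s' a y) :=
          sum_congr rfl fun s _ => sum_congr rfl fun y _ => by rw [hindep, mul_comm]
      _ = _ := sum_sum_negMulLog_mul _ _ htotal hY
  have hcomm : ∑ a, ∑ s, negMulLog (∑ y, q s a y) = ∑ s, ∑ a, negMulLog (∑ y, q s a y) :=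
    sum_comm
  have hsum := sum_le_sum fun a (_ : a ∈ univ) => hsubmod a
  rw [sum_add_distrib, sum_add_distrib] at hsum
  linarith

lemma binEnt_sub_le_of_indep {S Y : Type*} [Fintype S] [Fintype Y]
    (q : S → Bool → Y → ℝ) (hq : ∀ s a y, 0 ≤ q s a y) (htotal : ∑ s, ∑ a, ∑ y, q s a y = 1)
    (hindep : ∀ s y, ∑ a, q s a y = (∑ s', ∑ a, q s' a y) * ∑ a, ∑ y', q s a y') :
    binEnt (∑ s, ∑ y, q s true y)
        - ∑ y, (∑ s, ∑ a, q s a y) * binEnt ((∑ s, q s true y) / ∑ s, ∑ a, q s a y)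
      ≤ ∑ s, (∑ a, ∑ y, q s a y) * binEnt ((∑ y, q s true y) / ∑ a, ∑ y, q s a y) := by
  have key := sum_negMulLog_marginals_le_of_indep q hq htotal hindep
  have hA : binEnt (∑ s, ∑ y, q s true y) = negMulLog (∑ s, ∑ y, q s true y)
      + negMulLog (∑ s, ∑ y, q s false y) := by
    have h1 : ∑ s, ∑ y, q s true y + ∑ s, ∑ y, q s false y = 1 := by
      rw [← htotal, ← sum_add_distrib]
      exact sum_congr rfl fun s _ => by rw [Fintype.sum_bool]
    have h := mul_binEnt_div (∑ s, ∑ y, q s true y) (∑ s, ∑ y, q s false y)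
    rwa [h1, div_one, one_mul, negMulLog_one, sub_zero] at h
  simp only [Fintype.sum_bool, sum_add_distrib] at key ⊢
  simp only [mul_binEnt_div, sum_sub_distrib, sum_add_distrib, hA]
  linarith

/-- Under perfect privacy (Y independent of X_S = σ(X)) and the Markov
chain X_S → X → Y, the mutual information I(A;Y) = H(A) − H(A|Y) of the binary
variable A = α(X) with Y satisfies I(A;Y) ≤ H(A | X_S). -/
theorem stmt8 {Ξ S Y : Type} [Fintype Ξ] [Fintype S] [Fintype Y] [DecidableEq S]
    (p : Ξ → Y → ℝ) (σ : Ξ → S) (α : Ξ → Bool)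
    (hp : ∀ x y, 0 ≤ p x y) (hsum : ∑ x, ∑ y, p x y = 1)
    (hpriv : ∀ (y : Y) (s : S),
      (∑ x ∈ univ.filter (fun x => σ x = s), p x y)
        = (∑ x, p x y) * (∑ x ∈ univ.filter (fun x => σ x = s), ∑ y', p x y')) :
    binEnt (∑ x ∈ univ.filter (fun x => α x = true), ∑ y, p x y)
      - ∑ y, (∑ x, p x y) *
          binEnt ((∑ x ∈ univ.filter (fun x => α x = true), p x y) / (∑ x, p x y))
    ≤ ∑ s, (∑ x ∈ univ.filter (fun x => σ x = s), ∑ y, p x y) *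
        binEnt ((∑ x ∈ univ.filter (fun x => σ x = s ∧ α x = true), ∑ y, p x y)
          / (∑ x ∈ univ.filter (fun x => σ x = s), ∑ y, p x y)) := by
  have hswap : ∀ t : Finset Ξ, ∑ y, ∑ x ∈ t, p x y = ∑ x ∈ t, ∑ y, p x y := fun _ => sum_comm
  have hmarg := binEnt_sub_le_of_indep
    (fun s a y => ∑ x ∈ univ.filter (fun x => σ x = s ∧ α x = a), p x y)
    (fun s a y => sum_nonneg fun x _ => hp x y)
    (by simpa only [hswap, sum_fiberwise_filter_and, sum_fiberwise] using hsum)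
    (fun s y => by simpa only [hswap, sum_fiberwise_filter_and, sum_fiberwise] using hpriv y s)
  simpa only [hswap, sum_fiberwise_filter_and, sum_fiberwise_filter_and', sum_fiberwise]
    using hmarg
end
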